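/- arXiv:1710.04656 — 4 statements merged into one kernel-verified Lean document; each statement's English description precedes it below -/
import Mathlib

section
/- Let g be a finite simple undirected graph on N with all degrees positive, and let q ∈ (0,1) be such that q cannot be written as a fraction with denominator equal to the degree d_i of any node i (e.g., q irrational). Then S ⊆ N is a convention for q if and only if N \ S is a convention for 1 − q. -/
open Finset

/-- `S` is a convention for threshold `q`. -/
def Convention {V : Type*} [Fintype V] [DecidableEq V] (G : SimpleGraph V)
    [DecidableRel G.Adj] (q : ℝ) (S : Finset V) : Prop :=
  (∀ i ∈ S, q * (G.degree i : ℝ) ≤ ((G.neighborFinset i ∩ S).card : ℝ)) ∧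
  (∀ i ∉ S, ((G.neighborFinset i ∩ S).card : ℝ) < q * (G.degree i : ℝ))

/-!
A convention for `q` is a set `S` with `i ∈ S ↔ q d_i ≤ |N_i ∩ S|` for every `i`. Since
`|N_i ∩ Sᶜ| = d_i - |N_i ∩ S|`, the condition `(1 - q) d_i ≤ |N_i ∩ Sᶜ|` for the complement reads
`|N_i ∩ S| ≤ q d_i`, which is the negation of `q d_i ≤ |N_i ∩ S|` unless the two sides tie;
a tie would make `q = |N_i ∩ S| / d_i`, which the hypothesis on `q` excludes.
-/

section

variable {V : Type*} [Fintype V] [DecidableEq V] (G : SimpleGraph V) [DecidableRel G.Adj]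

theorem SimpleGraph.card_neighborFinset_inter_add_card_inter_compl (S : Finset V) (i : V) :
    #(G.neighborFinset i ∩ S) + #(G.neighborFinset i ∩ Sᶜ) = G.degree i := by
  rw [← G.card_neighborFinset_eq_degree, ← card_inter_add_card_sdiff (G.neighborFinset i) S,
    sdiff_eq_inter_compl]

theorem convention_iff_forall_mem_iff (q : ℝ) (S : Finset V) :
    Convention G q S ↔
      ∀ i, i ∈ S ↔ q * (G.degree i : ℝ) ≤ (#(G.neighborFinset i ∩ S) : ℝ) := by
  refine ⟨fun ⟨hin, hout⟩ i => ⟨hin i, fun h => ?_⟩, fun h => ⟨fun i => (h i).1, fun i hi => ?_⟩⟩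
  · by_contra hi
    exact (hout i hi).not_ge h
  · exact lt_of_not_ge (mt (h i).2 hi)

theorem convention_compl_iff_of_forall_ne (q : ℝ) (S : Finset V)
    (hne : ∀ i, q * (G.degree i : ℝ) ≠ (#(G.neighborFinset i ∩ S) : ℝ)) :
    Convention G q S ↔ Convention G (1 - q) Sᶜ := by
  rw [convention_iff_forall_mem_iff, convention_iff_forall_mem_iff]
  refine forall_congr' fun i => ?_
  have hcard : (#(G.neighborFinset i ∩ S) : ℝ) + #(G.neighborFinset i ∩ Sᶜ) = G.degree i := by
    exact_mod_cast G.card_neighborFinset_inter_add_card_inter_compl S i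
  have hflip : (1 - q) * (G.degree i : ℝ) ≤ #(G.neighborFinset i ∩ Sᶜ) ↔
      ¬ q * (G.degree i : ℝ) ≤ #(G.neighborFinset i ∩ S) := by
    rw [not_le, ← (hne i).symm.le_iff_lt]
    constructor <;> intro h <;> linarith
  rw [mem_compl, hflip, not_iff_not]

end

theorem convention_compl_iff_general
    {V : Type*} [Fintype V] [DecidableEq V] (G : SimpleGraph V) [DecidableRel G.Adj]
    (hdeg : ∀ i : V, 1 ≤ G.degree i) (q : ℝ)
    (hirr : ∀ i : V, ∀ m : ℕ, q ≠ (m : ℝ) / (G.degree i : ℝ))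
    (S : Finset V) :
    Convention G q S ↔ Convention G (1 - q) Sᶜ := by
  refine convention_compl_iff_of_forall_ne G q S fun i h => ?_
  have hd : (G.degree i : ℝ) ≠ 0 := Nat.cast_ne_zero.mpr (by have := hdeg i; omega)
  exact hirr i _ (eq_div_of_mul_eq hd h)

theorem convention_compl_iff
    {V : Type*} [Fintype V] [DecidableEq V] (G : SimpleGraph V) [DecidableRel G.Adj]
    (hdeg : ∀ i : V, 1 ≤ G.degree i) (q : ℝ) (hq : q ∈ Set.Ioo (0 : ℝ) 1)
    (hirr : ∀ i : V, ∀ m : ℕ, q ≠ (m : ℝ) / (G.degree i : ℝ))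
    (S : Finset V) :
    Convention G q S ↔ Convention G (1 - q) Sᶜ :=
  convention_compl_iff_general G hdeg q hirr S
end

section
/- Let Q ⊆ [0,1] be nonempty. If S is a robust convention relative to Q (a convention for all q ∈ Q), then S is a convention for every q in the half-open interval (inf(Q), sup(Q)]. -/
/-! For `i ∈ S` the convention condition `q * dᵢ ≤ cᵢ` is downward closed in `q`, and for `i ∉ S`
the condition `cᵢ < q * dᵢ` is upward closed; so both survive passing from `Q` to `sSup Q`,
respectively to anything strictly above `sInf Q`. -/

open Finset

section Threshold

variable {Q : Set ℝ} {c d q : ℝ}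

lemma mul_le_of_le_csSup (hQ : Q.Nonempty) (hd : 0 ≤ d) (h : ∀ q' ∈ Q, q' * d ≤ c)
    (hq : q ≤ sSup Q) : q * d ≤ c := by
  obtain ⟨q₀, hq₀⟩ := hQ
  rcases hd.eq_or_lt with rfl | hd
  · simpa using h q₀ hq₀
  · have hsup : sSup Q ≤ c / d :=
      csSup_le ⟨q₀, hq₀⟩ fun q' hq' => (le_div_iff₀ hd).2 (h q' hq')
    exact (le_div_iff₀ hd).1 (hq.trans hsup)

lemma lt_mul_of_csInf_lt (hQ : Q.Nonempty) (hd : 0 ≤ d) (h : ∀ q' ∈ Q, c < q' * d)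
    (hq : sInf Q < q) : c < q * d := by
  obtain ⟨q₀, hq₀⟩ := hQ
  rcases hd.eq_or_lt with rfl | hd
  · simpa using h q₀ hq₀
  · have hinf : c / d ≤ sInf Q :=
      le_csInf ⟨q₀, hq₀⟩ fun q' hq' => ((div_lt_iff₀ hd).2 (h q' hq')).le
    exact (div_lt_iff₀ hd).1 (hinf.trans_lt hq)

end Threshold

theorem robust_convention_on_interval_general
    {V : Type*} [Fintype V] [DecidableEq V] (G : SimpleGraph V) [DecidableRel G.Adj]
    (Q : Set ℝ) (hQne : Q.Nonempty)
    (S : Finset V)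
    (hrobust : ∀ q ∈ Q, Convention G q S) :
    ∀ q ∈ Set.Ioc (sInf Q) (sSup Q), Convention G q S := by
  rintro q ⟨hq_inf, hq_sup⟩
  exact ⟨fun i hi => mul_le_of_le_csSup hQne (Nat.cast_nonneg _)
      (fun q' hq' => (hrobust q' hq').1 i hi) hq_sup,
    fun i hi => lt_mul_of_csInf_lt hQne (Nat.cast_nonneg _)
      (fun q' hq' => (hrobust q' hq').2 i hi) hq_inf⟩

theorem robust_convention_on_interval
    {V : Type*} [Fintype V] [DecidableEq V] (G : SimpleGraph V) [DecidableRel G.Adj]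
    (hdeg : ∀ i : V, 1 ≤ G.degree i)
    (Q : Set ℝ) (hQsub : Q ⊆ Set.Icc (0 : ℝ) 1) (hQne : Q.Nonempty)
    (hlt : sInf Q < sSup Q) (S : Finset V)
    (hrobust : ∀ q ∈ Q, Convention G q S) :
    ∀ q ∈ Set.Ioc (sInf Q) (sSup Q), Convention G q S :=
  robust_convention_on_interval_general G Q hQne S hrobust
end

section
/- For absolute threshold t = 1, the atoms of the behavioral community structure C(1,g) are exactly the connected components of g: S is a convention for t = 1 if and only if S is a union of connected components of g. -/
open Finset

/-- `S` is a convention for the absolute threshold `t` (a natural number). -/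
def ConventionAbs {V : Type*} [Fintype V] [DecidableEq V] (G : SimpleGraph V)
    [DecidableRel G.Adj] (t : ℕ) (S : Finset V) : Prop :=
  (∀ i ∈ S, t ≤ (G.neighborFinset i ∩ S).card) ∧
  (∀ i ∉ S, (G.neighborFinset i ∩ S).card < t)

/-- `C(t,g)`: the σ-algebra generated by all conventions for absolute threshold `t`. -/
def CommStructureAbs {V : Type*} [Fintype V] [DecidableEq V] (G : SimpleGraph V)
    [DecidableRel G.Adj] (t : ℕ) : MeasurableSpace V :=
  MeasurableSpace.generateFrom {A : Set V | ∃ S : Finset V, ConventionAbs G t S ∧ A = ↑S}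

/-- `A` is an atom (minimal nonempty element) of `C(t,g)`. -/
def IsAtomOfAbs {V : Type*} [Fintype V] [DecidableEq V] (G : SimpleGraph V)
    [DecidableRel G.Adj] (t : ℕ) (A : Set V) : Prop :=
  @MeasurableSet V (CommStructureAbs G t) A ∧ A.Nonempty ∧
    ∀ B : Set V, @MeasurableSet V (CommStructureAbs G t) B → B ⊆ A → B.Nonempty → B = A

/-! For `t = 1` no vertex outside a convention has a neighbour inside it, so a convention is
closed under adjacency and hence a union of components; conversely, since every vertex has a
neighbour, every union of components is a convention. Unions of components are stable under
complements and countable unions, so every set of `C(1,g)` is a union of components, while each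
component is itself a convention; the components are therefore the atoms. -/

open scoped MeasureTheory

namespace SimpleGraph

variable {V : Type*} (G : SimpleGraph V)

def IsReachClosed (A : Set V) : Prop :=
  ∀ ⦃v⦄, v ∈ A → ∀ ⦃w⦄, G.Reachable v w → w ∈ A

variable {G}

theorem isReachClosed_iff_adj {A : Set V} :
    G.IsReachClosed A ↔ ∀ ⦃v⦄, v ∈ A → ∀ ⦃w⦄, G.Adj v w → w ∈ A := by
  refine ⟨fun h v hv w hvw => h hv hvw.reachable, fun h v hv w hvw => ?_⟩
  rw [reachable_iff_reflTransGen] at hvw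
  induction hvw with
  | refl => exact hv
  | tail _ hadj ih => exact h ih hadj

theorem isReachClosed_setOf_reachable (v : V) : G.IsReachClosed {w | G.Reachable v w} :=
  fun _ hu _ huw => Reachable.trans hu huw

theorem IsReachClosed.compl {A : Set V} (h : G.IsReachClosed A) : G.IsReachClosed Aᶜ :=
  fun _ hv _ hvw hw => hv (h hw hvw.symm)

theorem isReachClosed_iUnion {ι : Sort*} {A : ι → Set V} (h : ∀ i, G.IsReachClosed (A i)) :
    G.IsReachClosed (⋃ i, A i) := by
  intro v hv w hvw
  obtain ⟨i, hi⟩ := Set.mem_iUnion.mp hv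
  exact Set.mem_iUnion.mpr ⟨i, h i hi hvw⟩

theorem atom_iff_eq_setOf_reachable {m : MeasurableSpace V}
    (hclosed : ∀ A, MeasurableSet[m] A → G.IsReachClosed A)
    (hcomp : ∀ v, MeasurableSet[m] {w | G.Reachable v w}) (A : Set V) :
    (MeasurableSet[m] A ∧ A.Nonempty ∧
        ∀ B, MeasurableSet[m] B → B ⊆ A → B.Nonempty → B = A) ↔
      ∃ v, A = {w | G.Reachable v w} := by
  constructor
  · rintro ⟨hA, ⟨v, hv⟩, hmin⟩
    exact ⟨v, (hmin _ (hcomp v) (fun _ hw => hclosed A hA hv hw) ⟨v, Reachable.refl v⟩).symm⟩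
  · rintro ⟨v, rfl⟩
    refine ⟨hcomp v, ⟨v, Reachable.refl v⟩, fun B hB hBA ⟨w, hw⟩ => ?_⟩
    exact hBA.antisymm fun u hu => hclosed B hB hw ((hBA hw).symm.trans hu)

variable [Fintype V] [DecidableEq V] [DecidableRel G.Adj]

theorem conventionAbs_one_iff (S : Finset V) :
    ConventionAbs G 1 S ↔
      (∀ i ∈ S, ∃ j ∈ S, G.Adj i j) ∧ ∀ i ∉ S, ∀ j, G.Adj i j → j ∉ S := by
  simp only [ConventionAbs, one_le_card, Nat.lt_one_iff, card_eq_zero, Finset.Nonempty,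
    eq_empty_iff_forall_notMem, mem_inter, mem_neighborFinset, not_and]
  exact and_congr (forall₂_congr fun _ _ => exists_congr fun _ => and_comm) Iff.rfl

theorem isReachClosed_of_conventionAbs_one {S : Finset V} (hS : ConventionAbs G 1 S) :
    G.IsReachClosed (S : Set V) := by
  refine isReachClosed_iff_adj.mpr fun v hv w hadj => ?_
  by_contra hw
  exact ((conventionAbs_one_iff S).mp hS).2 w hw v hadj.symm hv

theorem conventionAbs_one_iff_isReachClosed (hdeg : ∀ i : V, 1 ≤ G.degree i) (S : Finset V) :
    ConventionAbs G 1 S ↔ G.IsReachClosed (S : Set V) := by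
  refine ⟨isReachClosed_of_conventionAbs_one, fun h => (conventionAbs_one_iff S).mpr ⟨?_, ?_⟩⟩
  · intro i hi
    obtain ⟨j, hj⟩ := card_pos.mp (hdeg i)
    have hij : G.Adj i j := (mem_neighborFinset G i j).mp hj
    exact ⟨j, h hi hij.reachable, hij⟩
  · exact fun i hi j hij hj => hi (h hj hij.symm.reachable)

theorem isReachClosed_of_measurableSet_commStructureAbs_one {A : Set V}
    (hA : MeasurableSet[CommStructureAbs G 1] A) : G.IsReachClosed A := by
  induction A, hA using MeasurableSpace.generateFrom_induction with
  | hC _ hC =>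
    obtain ⟨S, hS, rfl⟩ := hC
    exact isReachClosed_of_conventionAbs_one hS
  | empty => exact fun _ hv => hv.elim
  | compl _ _ h => exact h.compl
  | iUnion _ _ h => exact isReachClosed_iUnion h

theorem measurableSet_commStructureAbs_one_setOf_reachable (hdeg : ∀ i : V, 1 ≤ G.degree i)
    (v : V) : MeasurableSet[CommStructureAbs G 1] {w | G.Reachable v w} := by
  apply MeasurableSpace.measurableSet_generateFrom
  refine ⟨{w | G.Reachable v w}.toFinset, ?_, by simp⟩
  rw [conventionAbs_one_iff_isReachClosed hdeg, Set.coe_toFinset]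
  exact isReachClosed_setOf_reachable v

end SimpleGraph

theorem abs_threshold_one_atoms_are_components
    {V : Type*} [Fintype V] [DecidableEq V] (G : SimpleGraph V) [DecidableRel G.Adj]
    (hdeg : ∀ i : V, 1 ≤ G.degree i) :
    (∀ S : Finset V, ConventionAbs G 1 S ↔ ∀ v ∈ S, ∀ w : V, G.Reachable v w → w ∈ S) ∧
      (∀ A : Set V, IsAtomOfAbs G 1 A ↔ ∃ v : V, A = {w | G.Reachable v w}) :=
  ⟨G.conventionAbs_one_iff_isReachClosed hdeg,
    SimpleGraph.atom_iff_eq_setOf_reachable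
      (fun _ => G.isReachClosed_of_measurableSet_commStructureAbs_one)
      (G.measurableSet_commStructureAbs_one_setOf_reachable hdeg)⟩
end

section
/- In the Erdős–Rényi random graph G(n,p) with p = p(n) < (1−ε)(k log n / n)^{1/k} for some fixed integer k ≥ 1 and ε ∈ (0,1), the expected number of k-closed sets of exactly k nodes, which equals C(n,k)·(1−p^k)^{n−k}, tends to infinity as n → ∞. -/
/-!
Write `x = p^k`. Below the threshold, `n x ≤ (1-ε) k log n` and `x → 0`, so from
`log (1 - x) ≥ -x / (1 - x)` the factor `(1 - x)^(n-k)` is at least `n^(-ck)` with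
`c = (1-ε)/(1-ε/2) < 1`, while `C(n,k) ≥ (n/2)^k / k!`. The product is therefore at least
a constant times `n^((1-c)k)`, which tends to infinity.
-/

open Filter Real Topology

lemma Nat.half_pow_div_factorial_le_choose {n k : ℕ} (h : 2 * k ≤ n + 2) :
    ((n : ℝ) / 2) ^ k / k.factorial ≤ n.choose k := by
  have hhalf : (n : ℝ) / 2 ≤ ((n + 1 - k : ℕ) : ℝ) := by
    have : (n : ℝ) ≤ 2 * ((n + 1 - k : ℕ) : ℝ) := by exact_mod_cast (by omega : n ≤ 2 * (n + 1 - k))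
    linarith
  calc ((n : ℝ) / 2) ^ k / k.factorial ≤ ((n + 1 - k : ℕ) : ℝ) ^ k / k.factorial := by gcongr
    _ ≤ n.choose k := Nat.pow_le_choose k n

lemma Real.exp_neg_mul_div_le_one_sub_pow {x : ℝ} (hx : x < 1) (m : ℕ) :
    exp (-(m * (x / (1 - x)))) ≤ (1 - x) ^ m := by
  have h1x : 0 < 1 - x := by linarith
  have hlog : -(x / (1 - x)) ≤ log (1 - x) :=
    calc -(x / (1 - x)) = 1 - (1 - x)⁻¹ := by field_simp; ring
      _ ≤ log (1 - x) := one_sub_inv_le_log_of_pos h1x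
  calc exp (-(m * (x / (1 - x)))) ≤ exp (m * log (1 - x)) := by
        rw [← mul_neg]
        exact exp_le_exp.2 (mul_le_mul_of_nonneg_left hlog m.cast_nonneg)
    _ = (1 - x) ^ m := by rw [← log_pow, exp_log (pow_pos h1x m)]

lemma pow_le_mul_of_le_mul_rpow_one_div {p a y : ℝ} {k : ℕ} (hk : k ≠ 0) (hp : 0 ≤ p)
    (ha0 : 0 ≤ a) (ha1 : a ≤ 1) (hy : 0 ≤ y) (h : p ≤ a * y ^ ((1 : ℝ) / k)) :
    p ^ k ≤ a * y :=
  calc p ^ k ≤ (a * y ^ ((1 : ℝ) / k)) ^ k := pow_le_pow_left₀ hp h k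
    _ = a ^ k * y := by rw [mul_pow, one_div, rpow_inv_natCast_pow hy hk]
    _ ≤ a * y := mul_le_mul_of_nonneg_right (pow_le_of_le_one ha0 ha1 hk) hy

lemma rpow_div_le_choose_mul_one_sub_pow {n k : ℕ} {x a δ : ℝ} (hn : 0 < n)
    (hkn : 2 * k ≤ n + 2) (hx0 : 0 ≤ x) (hxδ : x ≤ δ) (hδ : δ < 1) (hnx : n * x ≤ a * log n) :
    (n : ℝ) ^ ((k : ℝ) - a / (1 - δ)) / (2 ^ k * k.factorial) ≤
      n.choose k * (1 - x) ^ (n - k) := by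
  have hn' : (0 : ℝ) < n := Nat.cast_pos.2 hn
  have hδ' : 0 < 1 - δ := by linarith
  have hexponent : ((n - k : ℕ) : ℝ) * (x / (1 - x)) ≤ log n * (a / (1 - δ)) :=
    calc ((n - k : ℕ) : ℝ) * (x / (1 - x)) ≤ n * (x / (1 - δ)) :=
          mul_le_mul (Nat.cast_le.2 (Nat.sub_le n k))
            (div_le_div_of_nonneg_left hx0 hδ' (by linarith)) (div_nonneg hx0 (by linarith)) hn'.le
      _ = n * x / (1 - δ) := by ring
      _ ≤ a * log n / (1 - δ) := by gcongr
      _ = log n * (a / (1 - δ)) := by ring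
  have hfactor : (n : ℝ) ^ (-(a / (1 - δ))) ≤ (1 - x) ^ (n - k) := by
    rw [rpow_def_of_pos hn']
    refine le_trans (exp_le_exp.2 ?_) (exp_neg_mul_div_le_one_sub_pow (hxδ.trans_lt hδ) (n - k))
    linarith
  calc (n : ℝ) ^ ((k : ℝ) - a / (1 - δ)) / (2 ^ k * k.factorial)
      = ((n : ℝ) / 2) ^ k / k.factorial * (n : ℝ) ^ (-(a / (1 - δ))) := by
        rw [sub_eq_add_neg, rpow_add hn', rpow_natCast, div_pow]
        ring
    _ ≤ n.choose k * (1 - x) ^ (n - k) :=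
        mul_le_mul (Nat.half_pow_div_factorial_le_choose hkn) hfactor (by positivity)
          (by positivity)

/-- Below the sharp threshold `(k log n / n)^{1/k}`, the expected number of
`k`-closed sets of exactly `k` nodes in `G(n,p)`, namely
`C(n,k)·(1−p^k)^{n−k}`, tends to infinity. -/
theorem expected_kClosed_tendsto_atTop
    (k : ℕ) (hk : 1 ≤ k) (ε : ℝ) (hε : ε ∈ Set.Ioo (0 : ℝ) 1)
    (p : ℕ → ℝ) (hp0 : ∀ n, 0 ≤ p n)
    (hplt : ∀ᶠ n : ℕ in atTop,
      p n < (1 - ε) * ((k * Real.log n / n) ^ ((1 : ℝ) / k))) :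
    Tendsto (fun n : ℕ => (n.choose k : ℝ) * (1 - p n ^ k) ^ (n - k))
      atTop atTop := by
  obtain ⟨hε0, hε1⟩ := hε
  have hbound : ∀ᶠ n : ℕ in atTop, p n ^ k ≤ (1 - ε) * (k * log n / n) :=
    hplt.mono fun n h => pow_le_mul_of_le_mul_rpow_one_div (by omega) (hp0 n) (by linarith)
      (by linarith) (by have := log_natCast_nonneg n; positivity) h.le
  have hratio : Tendsto (fun n : ℕ => (1 - ε) * (k * log n / n)) atTop (𝓝 0) := by
    simpa [mul_div_assoc] using
      ((isLittleO_log_id_atTop.tendsto_div_nhds_zero.comp tendsto_natCast_atTop_atTop).const_mul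
        (k : ℝ)).const_mul (1 - ε)
  have hsmall : ∀ᶠ n : ℕ in atTop, p n ^ k ≤ ε / 2 :=
    (hbound.and (hratio.eventually (eventually_le_nhds (by linarith)))).mono
      fun n h => h.1.trans h.2
  set e : ℝ := k - (1 - ε) * k / (1 - ε / 2)
  have he : 0 < e := by
    have hk' : (1 : ℝ) ≤ k := by exact_mod_cast hk
    rw [sub_pos, div_lt_iff₀ (by linarith)]
    nlinarith
  have hlower : ∀ᶠ n : ℕ in atTop,
      (n : ℝ) ^ e / (2 ^ k * k.factorial) ≤ (n.choose k : ℝ) * (1 - p n ^ k) ^ (n - k) := by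
    filter_upwards [hbound, hsmall, eventually_ge_atTop (2 * k)] with n hn1 hn2 hn
    refine rpow_div_le_choose_mul_one_sub_pow (by omega) (by omega) (pow_nonneg (hp0 n) k) hn2
      (by linarith) ?_
    have hn' : (n : ℝ) ≠ 0 := by exact_mod_cast (by omega : n ≠ 0)
    calc (n : ℝ) * p n ^ k ≤ n * ((1 - ε) * (k * log n / n)) := by gcongr
      _ = (1 - ε) * k * log n := by field_simp
  exact tendsto_atTop_mono' atTop hlower
    (((tendsto_rpow_atTop he).comp tendsto_natCast_atTop_atTop).atTop_div_const (by positivity))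
end
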